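/- With A(ρ,m) as above, the derivative in m satisfies m ∂_m A(ρ,m) ≥ 3 A(ρ,m) for all ρ > 0 and m ∈ ℝ. -/

import Mathlib

/-!
Write `R(u) = g(u + x) - g(x) - g'(x) u - ½ g''(x) u²`. If `g'''` is monotone, then
`u R'(u) ≥ 3 R(u)`: both `φ = u R' - 3 R` and `ψ = φ' = u R'' - 2 R'` vanish at `0`, and
`ψ'(u) = u g'''(u + x) - (g''(u + x) - g''(x)) ≥ 0` is the tangent-line inequality for the convex
function `g''`; so `ψ` has the sign of `u` and `φ` is minimal at `0`. This avoids the identity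
with `g⁗`, which is singular at `0` when `p < 4`. For `g = |·|^p` with `p = 2γ/(γ-1) > 3`,
`g'''` is a positive multiple of `|ξ|^(p-4) ξ`, which is monotone. Integrating against the weight
`(1 - z²)^l ≥ 0` and differentiating under the integral sign, with `m = ρ u`, gives the theorem.
-/

open MeasureTheory Set

theorem Monotone.sub_mul_sub_nonneg {f : ℝ → ℝ} (hf : Monotone f) (x y : ℝ) :
    0 ≤ (y - x) * (f y - f x) := by
  rcases le_total x y with h | h
  · exact mul_nonneg (sub_nonneg.2 h) (sub_nonneg.2 (hf h))
  · exact mul_nonneg_of_nonpos_of_nonpos (sub_nonpos.2 h) (sub_nonpos.2 (hf h))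

theorem apply_le_apply_of_sub_mul_deriv_nonneg {f f' : ℝ → ℝ} {a : ℝ}
    (hf : ∀ t, HasDerivAt f (f' t) t) (hf' : ∀ t, 0 ≤ (t - a) * f' t) (t : ℝ) :
    f a ≤ f t := by
  have hcont : Continuous f := continuous_iff_continuousAt.2 fun t => (hf t).continuousAt
  rcases le_total a t with hat | hta
  · refine monotoneOn_of_hasDerivWithinAt_nonneg (convex_Ici a) hcont.continuousOn
      (fun t _ => (hf t).hasDerivWithinAt) (fun t ht => ?_) self_mem_Ici hat hat
    rw [interior_Ici] at ht
    exact nonneg_of_mul_nonneg_right (hf' t) (sub_pos.2 ht)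
  · refine antitoneOn_of_hasDerivWithinAt_nonpos (convex_Iic a) hcont.continuousOn
      (fun t _ => (hf t).hasDerivWithinAt) (fun t ht => ?_) hta self_mem_Iic hta
    rw [interior_Iic] at ht
    exact nonpos_of_mul_nonneg_right (hf' t) (sub_neg.2 ht)

theorem add_mul_sub_le_of_hasDerivAt_of_monotone {f f' : ℝ → ℝ}
    (hf : ∀ t, HasDerivAt f (f' t) t) (hf' : Monotone f') (a t : ℝ) :
    f a + f' a * (t - a) ≤ f t := by
  have h := apply_le_apply_of_sub_mul_deriv_nonneg (f := fun s => f s - f' a * (s - a)) (a := a)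
    (fun s => ((hf s).sub ((hasDerivAt_id s).sub_const a |>.const_mul (f' a))))
    (fun s => by simpa using hf'.sub_mul_sub_nonneg a s) t
  simp only [sub_self, mul_zero, sub_zero] at h
  linarith

theorem three_mul_taylor_remainder_le {f f' f'' f''' : ℝ → ℝ}
    (hf : ∀ x, HasDerivAt f (f' x) x) (hf' : ∀ x, HasDerivAt f' (f'' x) x)
    (hf'' : ∀ x, HasDerivAt f'' (f''' x) x) (hf''' : Monotone f''') (x u : ℝ) :
    3 * (f (u + x) - f x - f' x * u - 1 / 2 * f'' x * u ^ 2) ≤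
      u * (f' (u + x) - f' x - f'' x * u) := by
  set ψ : ℝ → ℝ := fun v => v * (f'' (v + x) - f'' x) - 2 * (f' (v + x) - f' x - f'' x * v)
  have hψ (v : ℝ) : HasDerivAt ψ (v * f''' (v + x) - (f'' (v + x) - f'' x)) v :=
    ((hasDerivAt_id' v).mul (((hf'' (v + x)).comp_add_const v x).sub_const (f'' x))).sub
      (((((hf' (v + x)).comp_add_const v x).sub_const (f' x)).sub
        ((hasDerivAt_id' v).const_mul (f'' x))).const_mul 2) |>.congr_deriv (by ring)
  have hψ_mono : Monotone ψ := monotone_of_hasDerivAt_nonneg hψ fun v => by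
    have := add_mul_sub_le_of_hasDerivAt_of_monotone hf'' hf''' (v + x) x
    simp only [Pi.zero_apply]
    linarith
  have hφ (v : ℝ) : HasDerivAt (fun v => v * (f' (v + x) - f' x - f'' x * v)
      - 3 * (f (v + x) - f x - f' x * v - 1 / 2 * f'' x * v ^ 2)) (ψ v) v :=
    ((hasDerivAt_id' v).mul ((((hf' (v + x)).comp_add_const v x).sub_const (f' x)).sub
      ((hasDerivAt_id' v).const_mul (f'' x)))).sub
      ((((((hf (v + x)).comp_add_const v x).sub_const (f x)).sub
        ((hasDerivAt_id' v).const_mul (f' x))).sub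
        ((hasDerivAt_pow 2 v).const_mul (1 / 2 * f'' x))).const_mul 3) |>.congr_deriv
      (by simp only [ψ, Pi.sub_apply]; push_cast; ring)
  have := apply_le_apply_of_sub_mul_deriv_nonneg (a := 0) hφ
    (fun v => by simpa [ψ] using hψ_mono.sub_mul_sub_nonneg 0 v) u
  simp only [zero_add, sub_self, mul_zero] at this
  linarith

theorem hasDerivAt_abs_rpow_mul_self {q : ℝ} (hq : 1 < q) (x : ℝ) :
    HasDerivAt (fun t => |t| ^ q * t) ((q + 1) * |x| ^ q) x := by
  have hsq : |x| ^ (q - 2) * (x * x) = |x| ^ q := by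
    rw [← abs_mul_abs_self, ← sq, ← Real.rpow_natCast, ← Real.rpow_add' (abs_nonneg x)]
    · norm_num
    · norm_num; linarith
  exact ((hasDerivAt_abs_rpow x hq).mul (hasDerivAt_id' x)).congr_deriv
    (by linear_combination q * hsq)

theorem monotone_abs_rpow_mul_self {r : ℝ} (hr : -1 < r) :
    Monotone fun x : ℝ => |x| ^ r * x := by
  refine monotone_of_odd_of_monotoneOn_nonneg (fun x : ℝ => by simp) ?_
  refine (Real.monotoneOn_rpow_Ici_of_exponent_nonneg (r := r + 1) (by linarith)).congr
    fun x (hx : 0 ≤ x) => ?_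
  rw [abs_of_nonneg hx]
  exact Real.rpow_add_one' hx (by linarith)

theorem exists_hasDerivAt_abs_rpow_of_three_lt {p : ℝ} (hp : 3 < p) :
    ∃ f' f'' f''' : ℝ → ℝ, (∀ x, HasDerivAt (|·| ^ p) (f' x) x) ∧
      (∀ x, HasDerivAt f' (f'' x) x) ∧ (∀ x, HasDerivAt f'' (f''' x) x) ∧ Monotone f''' :=
  ⟨fun x => p * (|x| ^ (p - 2) * x), fun x => p * (p - 1) * |x| ^ (p - 2),
    fun x => p * (p - 1) * (p - 2) * (|x| ^ (p - 4) * x),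
    fun x => (hasDerivAt_abs_rpow x (by linarith)).congr_deriv (by ring),
    fun x => ((hasDerivAt_abs_rpow_mul_self (by linarith) x).const_mul p).congr_deriv (by ring),
    fun x => ((hasDerivAt_abs_rpow x (by linarith)).const_mul (p * (p - 1))).congr_deriv
      (by ring_nf),
    (monotone_abs_rpow_mul_self (by linarith)).const_mul
      (mul_pos (mul_pos (by linarith) (by linarith)) (by linarith)).le⟩

theorem hasDerivAt_intervalIntegral_of_continuous {E : Type*} [NormedAddCommGroup E]
    [NormedSpace ℝ E] {F F' : ℝ → ℝ → E} {a b : ℝ} (hF : ∀ x, Continuous (F x))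
    (hF' : Continuous (Function.uncurry F')) (h_diff : ∀ x t, HasDerivAt (F · t) (F' x t) x)
    (x₀ : ℝ) : HasDerivAt (fun x => ∫ t in a..b, F x t) (∫ t in a..b, F' x₀ t) x₀ := by
  obtain ⟨C, hC⟩ := (isCompact_closedBall x₀ 1 |>.prod isCompact_uIcc)
    |>.exists_bound_of_continuousOn hF'.continuousOn
  refine (intervalIntegral.hasDerivAt_integral_of_dominated_loc_of_deriv_le (bound := fun _ => C)
    (Metric.ball_mem_nhds x₀ one_pos) (.of_forall fun x => (hF x).aestronglyMeasurable)
    ((hF x₀).intervalIntegrable a b) (hF'.uncurry_left x₀).aestronglyMeasurable ?_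
    intervalIntegrable_const (.of_forall fun t _ x _ => h_diff x t)).2
  exact .of_forall fun t ht x hx =>
    hC (x, t) ⟨Metric.ball_subset_closedBall hx, uIoc_subset_uIcc ht⟩

noncomputable def taylorRemainderIntegral (f f' f'' w : ℝ → ℝ) (c u : ℝ) : ℝ :=
  ∫ z in (-1 : ℝ)..1,
    (f (u + z * c) - f (z * c) - f' (z * c) * u - 1 / 2 * f'' (z * c) * u ^ 2) * w z

theorem hasDerivAt_taylorRemainderIntegral {f f' f'' w : ℝ → ℝ}
    (hf : ∀ x, HasDerivAt f (f' x) x) (hf' : ∀ x, HasDerivAt f' (f'' x) x)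
    (hf'' : Continuous f'') (hw : Continuous w) (c u : ℝ) :
    HasDerivAt (taylorRemainderIntegral f f' f'' w c)
      (∫ z in (-1 : ℝ)..1, (f' (u + z * c) - f' (z * c) - f'' (z * c) * u) * w z) u := by
  have hf_cont : Continuous f := continuous_iff_continuousAt.2 fun x => (hf x).continuousAt
  have hf'_cont : Continuous f' := continuous_iff_continuousAt.2 fun x => (hf' x).continuousAt
  refine hasDerivAt_intervalIntegral_of_continuous
    (F := fun u z =>
      (f (u + z * c) - f (z * c) - f' (z * c) * u - 1 / 2 * f'' (z * c) * u ^ 2) * w z)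
    (F' := fun u z => (f' (u + z * c) - f' (z * c) - f'' (z * c) * u) * w z)
    (fun v => by fun_prop) (by simp only [Function.uncurry_def]; fun_prop) (fun v z => ?_) u
  exact (((((hf (v + z * c)).comp_add_const v (z * c)).sub_const _).sub
    ((hasDerivAt_id' v).const_mul _)).sub ((hasDerivAt_pow 2 v).const_mul _)).mul_const _
    |>.congr_deriv (by push_cast; ring)

theorem three_mul_taylorRemainderIntegral_le_mul_deriv {f f' f'' f''' w : ℝ → ℝ}
    (hf : ∀ x, HasDerivAt f (f' x) x) (hf' : ∀ x, HasDerivAt f' (f'' x) x)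
    (hf'' : ∀ x, HasDerivAt f'' (f''' x) x) (hf''' : Monotone f''') (hw : Continuous w)
    (hw_nonneg : ∀ z ∈ Icc (-1 : ℝ) 1, 0 ≤ w z) (c u : ℝ) :
    3 * taylorRemainderIntegral f f' f'' w c u ≤
      u * deriv (taylorRemainderIntegral f f' f'' w c) u := by
  have hf_cont : Continuous f := continuous_iff_continuousAt.2 fun x => (hf x).continuousAt
  have hf'_cont : Continuous f' := continuous_iff_continuousAt.2 fun x => (hf' x).continuousAt
  have hf''_cont : Continuous f'' := continuous_iff_continuousAt.2 fun x => (hf'' x).continuousAt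
  rw [(hasDerivAt_taylorRemainderIntegral hf hf' hf''_cont hw c u).deriv, taylorRemainderIntegral,
    ← intervalIntegral.integral_const_mul, ← intervalIntegral.integral_const_mul]
  refine intervalIntegral.integral_mono_on (by norm_num) (Continuous.intervalIntegrable
    (by fun_prop) _ _) (Continuous.intervalIntegrable (by fun_prop) _ _) fun z hz => ?_
  have := mul_le_mul_of_nonneg_right (three_mul_taylor_remainder_le hf hf' hf'' hf''' (z * c) u)
    (hw_nonneg z hz)
  linarith

theorem A_m_times_m_ge_three_A_general (γ θ l : ℝ) (hγ1 : 1 < γ) (hγ3 : γ < 3)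
    (hl : l = (3 - γ) / (2 * (γ - 1)))
    (g : ℝ → ℝ) (hg : ∀ ξ : ℝ, g ξ = |ξ| ^ (2 * γ / (γ - 1)))
    (Afun : ℝ → ℝ → ℝ)
    (hA : ∀ ρ m : ℝ, Afun ρ m = ρ * ∫ z in (-1 : ℝ)..1,
      (g (m / ρ + z * ρ ^ θ) - g (z * ρ ^ θ) - deriv g (z * ρ ^ θ) * (m / ρ)
        - (1 / 2) * deriv (deriv g) (z * ρ ^ θ) * (m / ρ) ^ 2) * (1 - z ^ 2) ^ l) :
    ∀ ρ m : ℝ, 0 < ρ → 3 * Afun ρ m ≤ m * deriv (fun m' => Afun ρ m') m := by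
  intro ρ m hρ
  have hp : 3 < 2 * γ / (γ - 1) := by rw [lt_div_iff₀ (by linarith)]; linarith
  have hl_pos : 0 < l := hl ▸ div_pos (by linarith) (by linarith)
  obtain ⟨g', g'', g''', hg', hg'', hg''', hg'''_mono⟩ :=
    exists_hasDerivAt_abs_rpow_of_three_lt hp
  rw [← funext hg] at hg'
  set w : ℝ → ℝ := fun z => (1 - z ^ 2) ^ l
  have hw : Continuous w := (continuous_const.sub (continuous_pow 2)).rpow_const
    fun _ => Or.inr hl_pos.le
  set I := taylorRemainderIntegral g g' g'' w (ρ ^ θ)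
  have hAI (m' : ℝ) : Afun ρ m' = ρ * I (m' / ρ) := by
    rw [hA, funext fun x => (hg' x).deriv, funext fun x => (hg'' x).deriv]
    rfl
  have hI_diff : DifferentiableAt ℝ I (m / ρ) :=
    (hasDerivAt_taylorRemainderIntegral hg' hg''
      (continuous_iff_continuousAt.2 fun x => (hg''' x).continuousAt) hw _ _).differentiableAt
  have hI : HasDerivAt (fun m' => Afun ρ m') (deriv I (m / ρ)) m := by
    rw [funext hAI]
    exact ((hI_diff.hasDerivAt.comp m ((hasDerivAt_id' m).div_const ρ)).const_mul ρ).congr_deriv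
      (by rw [mul_one_div, mul_div_cancel₀ _ hρ.ne'])
  have key := three_mul_taylorRemainderIntegral_le_mul_deriv hg' hg'' hg''' hg'''_mono hw
    (fun z hz => Real.rpow_nonneg (by nlinarith [hz.1, hz.2]) l) (ρ ^ θ) (m / ρ)
  rw [hI.deriv, hAI]
  calc 3 * (ρ * I (m / ρ)) = ρ * (3 * I (m / ρ)) := by ring
    _ ≤ ρ * (m / ρ * deriv I (m / ρ)) := by gcongr
    _ = m * deriv I (m / ρ) := by field_simp

theorem A_m_times_m_ge_three_A (γ θ l : ℝ) (hγ1 : 1 < γ) (hγ3 : γ < 3)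
    (hθ : θ = (γ - 1) / 2) (hl : l = (3 - γ) / (2 * (γ - 1)))
    (g : ℝ → ℝ) (hg : ∀ ξ : ℝ, g ξ = |ξ| ^ (2 * γ / (γ - 1)))
    (Afun : ℝ → ℝ → ℝ)
    (hA : ∀ ρ m : ℝ, Afun ρ m = ρ * ∫ z in (-1 : ℝ)..1,
      (g (m / ρ + z * ρ ^ θ) - g (z * ρ ^ θ) - deriv g (z * ρ ^ θ) * (m / ρ)
        - (1 / 2) * deriv (deriv g) (z * ρ ^ θ) * (m / ρ) ^ 2) * (1 - z ^ 2) ^ l) :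
    ∀ ρ m : ℝ, 0 < ρ → 3 * Afun ρ m ≤ m * deriv (fun m' => Afun ρ m') m :=
  A_m_times_m_ge_three_A_general γ θ l hγ1 hγ3 hl g hg Afun hA
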